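/- Suppose F is injective and Σ is an F-spanning set for Γ. Then the language over the alphabet Σ × Σ × Σ consisting of all words (x_0,y_0,z_0)(x_1,y_1,z_1)⋯(x_{n−1},y_{n−1},z_{n−1}) such that [x_0⋯x_{n−1}]_F + [y_0⋯y_{n−1}]_F = [z_0⋯z_{n−1}]_F is regular. (Equivalently, the set G of triples (u, v, w) of words over Σ of the same length with [u]_F + [v]_F = [w]_F is a regular subset of (Σ×Σ×Σ)*.) -/

import Mathlib

open Pointwise

/-- `[w]_F`: the base-`F` evaluation of a word `w = x₀x₁⋯x_m`,
namely `x₀ + F x₁ + ⋯ + F^m x_m`, with `[∅]_F = 0`. -/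
def wordVal {Γ : Type*} [AddCommGroup Γ] (F : AddMonoid.End Γ) : List Γ → Γ
  | [] => 0
  | x :: xs => x + F (wordVal F xs)

/-- `Sig` is an `F`-spanning set for `Γ`. -/
def IsSpanningSet {Γ : Type*} [AddCommGroup Γ] (F : AddMonoid.End Γ) (Sig : Set Γ) : Prop :=
  Sig.Finite ∧
  (0 : Γ) ∈ Sig ∧ (∀ x ∈ Sig, -x ∈ Sig) ∧
  (∀ x : Γ, F x ∈ Sig → x ∈ Sig) ∧
  (∀ x : Γ, ∃ w : List Γ, (∀ y ∈ w, y ∈ Sig) ∧ wordVal F w = x) ∧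
  (∀ x₁ ∈ Sig, ∀ x₂ ∈ Sig, ∀ x₃ ∈ Sig, ∀ x₄ ∈ Sig, ∀ x₅ ∈ Sig,
    ∃ t ∈ Sig, ∃ t' ∈ Sig, x₁ + x₂ + x₃ + x₄ + x₅ = t + F t') ∧
  (∀ x₁ ∈ Sig, ∀ x₂ ∈ Sig, ∀ x₃ ∈ Sig,
    (∃ y : Γ, x₁ + x₂ + x₃ = F y) → ∃ t ∈ Sig, x₁ + x₂ + x₃ = F t)

/-!
Read a triple `(x, y, z)` as a digit of value `x + y - z`, least significant digit first. After a
prefix `w` of length `n`, with word of digit values `d w`, the remaining input has to cancel the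
carry `c` with `F^n c = [d w]_F`, which is unique because `F` is injective; so the left quotient of
the language by `w` is `{v | [d v]_F = -c}`, or empty when there is no carry. Properties (i), (ii)
and (iv) of a spanning set keep every carry inside the finite set `Σ + Σ`, so there are only
finitely many left quotients and the Myhill–Nerode theorem applies.
-/

section WordVal

variable {Γ : Type*} [AddCommGroup Γ] (F : AddMonoid.End Γ)

lemma wordVal_append (u v : List Γ) :
    wordVal F (u ++ v) = wordVal F u + (F ^ u.length) (wordVal F v) := by
  induction u with
  | nil => simp [wordVal]
  | cons a u ih =>
    rw [List.cons_append, wordVal, wordVal, ih, List.length_cons, map_add, add_assoc]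
    simp only [AddMonoid.End.coe_pow, Function.iterate_succ_apply']

lemma wordVal_singleton (x : Γ) : wordVal F [x] = x := by
  simp [wordVal]

variable {α : Type*}

lemma wordVal_map_add (f g : α → Γ) (w : List α) :
    wordVal F (w.map fun a => f a + g a) = wordVal F (w.map f) + wordVal F (w.map g) := by
  induction w with
  | nil => simp [wordVal]
  | cons a w ih => simp only [List.map_cons, wordVal, ih, map_add]; abel

lemma wordVal_map_sub (f g : α → Γ) (w : List α) :
    wordVal F (w.map fun a => f a - g a) = wordVal F (w.map f) - wordVal F (w.map g) := by
  induction w with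
  | nil => simp [wordVal]
  | cons a w ih => simp only [List.map_cons, wordVal, ih, map_sub]; abel

end WordVal

section Carries

variable {Γ α : Type*} [AddCommGroup Γ] (F : AddMonoid.End Γ) (d : α → Γ)

lemma mem_of_pow_apply_eq_wordVal_map {K : Set Γ} (hK0 : 0 ∈ K)
    (hK : ∀ c ∈ K, ∀ a c', F c' = c + d a → c' ∈ K) (w : List α) {c : Γ}
    (hc : (F ^ w.length) c = wordVal F (w.map d)) : c ∈ K := by
  induction w using List.reverseRecOn generalizing c with
  | nil =>
    obtain rfl : c = 0 := by simpa [wordVal] using hc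
    exact hK0
  | append_singleton w a ih =>
    rw [List.map_append, wordVal_append, List.length_append, List.length_singleton,
      List.map_singleton, wordVal_singleton, List.length_map, AddMonoid.End.coe_pow,
      Function.iterate_succ_apply, ← AddMonoid.End.coe_pow] at hc
    have hprev : (F ^ w.length) (F c - d a) = wordVal F (w.map d) := by
      rw [map_sub, hc, add_sub_cancel_right]
    exact hK _ (ih hprev) a c (sub_add_cancel _ _).symm

lemma leftQuotient_setOf_wordVal_map_eq_zero (w : List α) :
    Language.leftQuotient {u | wordVal F (u.map d) = 0} w =
      {v | wordVal F (w.map d) + (F ^ w.length) (wordVal F (v.map d)) = 0} := by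
  ext v
  show wordVal F ((w ++ v).map d) = 0 ↔ _
  rw [List.map_append, wordVal_append, List.length_map]
  rfl

theorem isRegular_setOf_wordVal_map_eq_zero (hF : Function.Injective F) {K : Set Γ}
    (hKfin : K.Finite) (hK0 : 0 ∈ K) (hK : ∀ c ∈ K, ∀ a c', F c' = c + d a → c' ∈ K) :
    Language.IsRegular {u | wordVal F (u.map d) = 0} := by
  refine Language.IsRegular.of_finite_range_leftQuotient <|
    ((hKfin.image fun c => {v | wordVal F (v.map d) = -c}).insert ∅).subset ?_
  rintro _ ⟨w, rfl⟩
  rw [leftQuotient_setOf_wordVal_map_eq_zero]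
  by_cases hcarry : ∃ c, (F ^ w.length) c = wordVal F (w.map d)
  · obtain ⟨c, hc⟩ := hcarry
    refine Or.inr ⟨c, mem_of_pow_apply_eq_wordVal_map F d hK0 hK w hc, ?_⟩
    have hFn : Function.Injective (F ^ w.length) := by
      rw [AddMonoid.End.coe_pow]; exact hF.iterate _
    ext v
    show _ = -c ↔ _ + _ = 0
    rw [← hc, ← map_add, map_eq_zero_iff _ hFn, add_eq_zero_iff_eq_neg']
  · refine Or.inl (Set.eq_empty_of_forall_notMem fun v hv => hcarry ⟨-wordVal F (v.map d), ?_⟩)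
    rw [map_neg, eq_comm, ← add_eq_zero_iff_eq_neg]
    exact hv

end Carries

lemma IsSpanningSet.carry_mem_add {Γ : Type*} [AddCommGroup Γ] {F : AddMonoid.End Γ}
    {Sig : Set Γ} (hSig : IsSpanningSet F Sig) {c x y z c' : Γ} (hc : c ∈ Sig + Sig)
    (hx : x ∈ Sig) (hy : y ∈ Sig) (hz : z ∈ Sig) (hc' : F c' = c + (x + y - z)) :
    c' ∈ Sig + Sig := by
  obtain ⟨-, -, hneg, hdiv, -, h5, -⟩ := hSig
  obtain ⟨s₁, hs₁, s₂, hs₂, rfl⟩ := Set.mem_add.mp hc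
  obtain ⟨t, ht, t', ht', hsum⟩ := h5 s₁ hs₁ s₂ hs₂ x hx y hy (-z) (hneg z hz)
  have hFt : F (c' - t') = t := by
    rw [map_sub, hc', ← add_sub_cancel_right t (F t'), ← hsum]
    abel
  exact ⟨c' - t', hdiv _ (hFt ▸ ht), t', ht', sub_add_cancel c' t'⟩

/-- If `F` is injective and `Σ` is an `F`-spanning set for `Γ`, then
the language over `Σ × Σ × Σ` of triples of words of the same length `(u,v,w)` with
`[u]_F + [v]_F = [w]_F` is regular. -/
theorem add_wordVal_lang_regular {Γ : Type*} [AddCommGroup Γ] (F : AddMonoid.End Γ)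
    (hF : Function.Injective ⇑F) (Sig : Set Γ) (hSig : IsSpanningSet F Sig) :
    Language.IsRegular {w : List (↥Sig × ↥Sig × ↥Sig) |
      wordVal F (w.map fun p => (p.1 : Γ)) + wordVal F (w.map fun p => (p.2.1 : Γ)) =
        wordVal F (w.map fun p => (p.2.2 : Γ))} := by
  have h0 : (0 : Γ) ∈ Sig + Sig := ⟨0, hSig.2.1, 0, hSig.2.1, add_zero 0⟩
  have hreg := isRegular_setOf_wordVal_map_eq_zero F
    (fun p : ↥Sig × ↥Sig × ↥Sig => (p.1 : Γ) + p.2.1 - p.2.2) hF (hSig.1.add hSig.1) h0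
    fun c hc p c' hc' => hSig.carry_mem_add hc p.1.2 p.2.1.2 p.2.2.2 hc'
  simpa only [wordVal_map_sub, wordVal_map_add, sub_eq_zero] using hreg
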